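/- Let α, β > 0 with α ≠ β and α + β < 1, and let K be the attractor of {φ₁(x) = αx, φ₂(x) = βx + 1 − β}. If f is a contractive similitude on ℝ with f(K) ⊆ K, then f = φ_{i₁} ∘ ⋯ ∘ φ_{i_n} for some finite word over {1,2}. -/

import Mathlib

/-!
The convex hull of `K` is `[0, 1]`, and the middle gap `(α, 1 - β)` is the unique longest
gap of `K`: any other gap lies inside `αK` or `βK + 1 - β` and is made longer by `φᵢ⁻¹`.
If `f(K) ⊆ K` with `|r| < 1`, the `f`-preimage of the middle gap would be a gap of length
`(1 - α - β) / |r|`, so `f(K)` lies in one of the two pieces and `f = φᵢ ∘ g` with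
`g(K) ⊆ K` and ratio `r / α` or `r / β`. Iterating, the ratio reaches modulus `1`, where `g`
is the identity: the reflection `x ↦ 1 - x` would carry the middle gap to the gap
`(β, 1 - α)`, forcing `α = β`.
-/

/-- Composition `φ_{i₁} ∘ φ_{i₂} ∘ ⋯ ∘ φ_{i_n}` along a finite word. -/
def compWord {ι : Type*} (φ : ι → ℝ → ℝ) (w : List ι) : ℝ → ℝ :=
  w.foldr (fun i g => φ i ∘ g) id

open Set

structure IsTwoMapAttractor (α β : ℝ) (K : Set ℝ) : Prop where
  pos_left : 0 < α
  pos_right : 0 < β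
  add_lt_one : α + β < 1
  isCompact : IsCompact K
  nonempty : K.Nonempty
  eq_union : K = (fun x => α * x) '' K ∪ (fun x => β * x + 1 - β) '' K

def IsGap (K : Set ℝ) (c d : ℝ) : Prop :=
  0 ≤ c ∧ d ≤ 1 ∧ ∀ x ∈ K, x ∉ Ioo c d

section Gap

variable {K : Set ℝ} {a b c d : ℝ}

theorem IsGap.preimage_of_pos (h : IsGap K c d) (ha : 0 < a)
    (hf : MapsTo (fun x => a * x + b) K K) (hc : b ≤ c) (hd : d ≤ a + b) :
    IsGap K ((c - b) / a) ((d - b) / a) := by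
  refine ⟨div_nonneg (by linarith) ha.le, (div_le_one ha).2 (by linarith), fun x hx hmem => ?_⟩
  rw [mem_Ioo, div_lt_iff₀ ha, lt_div_iff₀ ha] at hmem
  exact h.2.2 _ (hf hx) ⟨by linarith, by linarith⟩

theorem IsGap.preimage_of_neg (h : IsGap K c d) (ha : a < 0)
    (hf : MapsTo (fun x => a * x + b) K K) (hc : a + b ≤ c) (hd : d ≤ b) :
    IsGap K ((d - b) / a) ((c - b) / a) := by
  refine ⟨div_nonneg_of_nonpos (by linarith) ha.le, (div_le_one_of_neg ha).2 (by linarith),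
    fun x hx hmem => ?_⟩
  rw [mem_Ioo, div_lt_iff_of_neg ha, lt_div_iff_of_neg ha] at hmem
  exact h.2.2 _ (hf hx) ⟨by linarith, by linarith⟩

end Gap

theorem pow_lt_abs_div_of_pow_succ_lt {m a r : ℝ} {n : ℕ} (ha : 0 < a) (ham : a ≤ m)
    (h : m ^ (n + 1) < |r|) : m ^ n < |r / a| := by
  rw [abs_div, abs_of_pos ha, lt_div_iff₀ ha]
  calc m ^ n * a ≤ m ^ n * m := mul_le_mul_of_nonneg_left ham (pow_nonneg (ha.le.trans ham) n)
    _ = m ^ (n + 1) := (pow_succ m n).symm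
    _ < |r| := h

namespace IsTwoMapAttractor

variable {α β : ℝ} {K : Set ℝ} {x c d r t : ℝ}

theorem mul_mem (hK : IsTwoMapAttractor α β K) (hx : x ∈ K) : α * x ∈ K :=
  hK.eq_union ▸ mem_union_left _ (mem_image_of_mem _ hx)

theorem affine_mem (hK : IsTwoMapAttractor α β K) (hx : x ∈ K) : β * x + 1 - β ∈ K :=
  hK.eq_union ▸ mem_union_right _ (mem_image_of_mem _ hx)

theorem mem_cases (hK : IsTwoMapAttractor α β K) (hx : x ∈ K) :
    (∃ y ∈ K, α * y = x) ∨ ∃ y ∈ K, β * y + 1 - β = x := by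
  rw [hK.eq_union] at hx
  exact hx

theorem isLeast_zero (hK : IsTwoMapAttractor α β K) : IsLeast K 0 := by
  obtain ⟨hmem, hlow⟩ := hK.isCompact.isLeast_sInf hK.nonempty
  suffices sInf K = 0 from this ▸ ⟨hmem, hlow⟩
  have := hK.pos_left
  have := hK.pos_right
  have := hK.add_lt_one
  apply le_antisymm
  · nlinarith [hlow (hK.mul_mem hmem)]
  · obtain ⟨y, hy, hxy⟩ | ⟨y, hy, hxy⟩ := hK.mem_cases hmem <;> nlinarith [hlow hy]

theorem isGreatest_one (hK : IsTwoMapAttractor α β K) : IsGreatest K 1 := by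
  obtain ⟨hmem, hup⟩ := hK.isCompact.isGreatest_sSup hK.nonempty
  suffices sSup K = 1 from this ▸ ⟨hmem, hup⟩
  have := hK.pos_left
  have := hK.pos_right
  have := hK.add_lt_one
  apply le_antisymm
  · obtain ⟨y, hy, hxy⟩ | ⟨y, hy, hxy⟩ := hK.mem_cases hmem <;> nlinarith [hup hy]
  · nlinarith [hup (hK.affine_mem hmem)]

theorem zero_mem (hK : IsTwoMapAttractor α β K) : (0 : ℝ) ∈ K := hK.isLeast_zero.1

theorem one_mem (hK : IsTwoMapAttractor α β K) : (1 : ℝ) ∈ K := hK.isGreatest_one.1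

theorem subset_Icc (hK : IsTwoMapAttractor α β K) : K ⊆ Icc 0 1 :=
  fun _ hx => ⟨hK.isLeast_zero.2 hx, hK.isGreatest_one.2 hx⟩

theorem le_or_le_of_mem (hK : IsTwoMapAttractor α β K) (hx : x ∈ K) :
    x ≤ α ∨ 1 - β ≤ x := by
  obtain ⟨y, hy, rfl⟩ | ⟨y, hy, rfl⟩ := hK.mem_cases hx
  · exact Or.inl (by nlinarith [(hK.subset_Icc hy).2, hK.pos_left])
  · exact Or.inr (by nlinarith [(hK.subset_Icc hy).1, hK.pos_right])

theorem isGap_central (hK : IsTwoMapAttractor α β K) : IsGap K α (1 - β) := by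
  refine ⟨hK.pos_left.le, by linarith [hK.pos_right], fun x hx hmem => ?_⟩
  rcases hK.le_or_le_of_mem hx with h | h <;> linarith [hmem.1, hmem.2]

theorem max_lt_one (hK : IsTwoMapAttractor α β K) : max α β < 1 :=
  max_lt (by linarith [hK.pos_right, hK.add_lt_one]) (by linarith [hK.pos_left, hK.add_lt_one])

theorem exists_isGap_of_not_central (hK : IsTwoMapAttractor α β K) (h : IsGap K c d)
    (hcd : c < d) (hc : ¬(α ≤ c ∧ d ≤ 1 - β)) :
    ∃ c' d', IsGap K c' d' ∧ (d - c) / max α β ≤ d' - c' := by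
  have hα := hK.pos_left
  have hβ := hK.pos_right
  have hαK : α ∉ Ioo c d := h.2.2 _ (by simpa using hK.mul_mem hK.one_mem)
  have hβK : 1 - β ∉ Ioo c d := h.2.2 _ (by simpa using hK.affine_mem hK.zero_mem)
  rw [mem_Ioo, not_and_or, not_lt, not_lt] at hαK hβK
  by_cases hleft : d ≤ α
  · refine ⟨_, _, h.preimage_of_pos hα (b := 0) (fun x hx => by simpa using hK.mul_mem hx)
      (by linarith [h.1]) (by linarith), ?_⟩
    calc (d - c) / max α β ≤ (d - c) / α :=
          div_le_div_of_nonneg_left (by linarith) hα (le_max_left α β)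
      _ = _ := by ring
  · have hright : 1 - β ≤ c :=
      hβK.resolve_right fun hd => hc ⟨hαK.resolve_right hleft, hd⟩
    refine ⟨_, _, h.preimage_of_pos hβ (b := 1 - β)
      (fun x hx => by simpa [add_sub_assoc] using hK.affine_mem hx) hright
      (by linarith [h.2.1]), ?_⟩
    calc (d - c) / max α β ≤ (d - c) / β :=
          div_le_div_of_nonneg_left (by linarith) hβ (le_max_right α β)
      _ = _ := by ring

theorem gap_length_le_pow (hK : IsTwoMapAttractor α β K) (n : ℕ) :
    ∀ {c d}, IsGap K c d → 1 - α - β < d - c → d - c ≤ max α β ^ n := by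
  have hm0 : 0 < max α β := lt_max_of_lt_left hK.pos_left
  have hm1 := hK.max_lt_one
  induction n with
  | zero => intro c d h _; linarith [h.1, h.2.1, pow_zero (max α β)]
  | succ n ih =>
    intro c d h hlen
    have hcd : 0 < d - c := by linarith [hK.add_lt_one]
    have hc : ¬(α ≤ c ∧ d ≤ 1 - β) := fun ⟨h1, h2⟩ => by linarith
    obtain ⟨c', d', h', hle⟩ := hK.exists_isGap_of_not_central h (by linarith) hc
    have hgrow : d - c < (d - c) / max α β := by rw [lt_div_iff₀ hm0]; nlinarith
    have hle' := ih h' (by linarith)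
    rw [div_le_iff₀ hm0] at hle
    rw [pow_succ]
    nlinarith

theorem gap_length_le (hK : IsTwoMapAttractor α β K) (h : IsGap K c d) :
    d - c ≤ 1 - α - β := by
  by_contra! hlen
  obtain ⟨n, hn⟩ :=
    exists_pow_lt_of_lt_one (by linarith [hK.add_lt_one] : 0 < d - c) hK.max_lt_one
  exact (hK.gap_length_le_pow n h hlen).not_gt hn

theorem eq_central_of_isGap (hK : IsTwoMapAttractor α β K) (h : IsGap K c d)
    (hlen : 1 - α - β ≤ d - c) : c = α ∧ d = 1 - β := by
  by_cases hc : α ≤ c ∧ d ≤ 1 - β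
  · constructor <;> linarith [hc.1, hc.2]
  have hm0 : 0 < max α β := lt_max_of_lt_left hK.pos_left
  have hm1 := hK.max_lt_one
  have hcd : 0 < d - c := by linarith [hK.add_lt_one]
  obtain ⟨c', d', h', hle⟩ := hK.exists_isGap_of_not_central h (by linarith) hc
  have hgrow : d - c < (d - c) / max α β := by rw [lt_div_iff₀ hm0]; nlinarith
  linarith [hK.gap_length_le h']

theorem eq_of_mapsTo_one_sub (hK : IsTwoMapAttractor α β K)
    (h : MapsTo (fun x => 1 - x) K K) : α = β := by
  have hgap : IsGap K β (1 - α) := by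
    refine ⟨hK.pos_right.le, by linarith [hK.pos_left], fun x hx hmem => ?_⟩
    exact hK.isGap_central.2.2 _ (h hx) ⟨by linarith [hmem.2], by linarith [hmem.1]⟩
  exact (hK.eq_central_of_isGap hgap (by linarith)).1.symm

theorem abs_le_one_of_mapsTo (hK : IsTwoMapAttractor α β K)
    (hf : MapsTo (fun x => r * x + t) K K) : |r| ≤ 1 := by
  have h0 := hK.subset_Icc (hf hK.zero_mem)
  have h1 := hK.subset_Icc (hf hK.one_mem)
  simp only [mul_zero, zero_add, mul_one, mem_Icc] at h0 h1
  exact abs_le.2 ⟨by linarith, by linarith⟩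

theorem eq_one_zero_of_abs_eq_one (hK : IsTwoMapAttractor α β K) (hne : α ≠ β)
    (hf : MapsTo (fun x => r * x + t) K K) (hr : |r| = 1) : r = 1 ∧ t = 0 := by
  have h0 := hK.subset_Icc (hf hK.zero_mem)
  have h1 := hK.subset_Icc (hf hK.one_mem)
  simp only [mul_zero, zero_add, mul_one, mem_Icc] at h0 h1
  rcases (abs_eq zero_le_one).1 hr with rfl | rfl
  · exact ⟨rfl, by linarith⟩
  · obtain rfl : t = 1 := by linarith
    refine absurd (hK.eq_of_mapsTo_one_sub fun x hx => ?_) hne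
    convert hf hx using 1
    ring

theorem mapsTo_le_or_ge (hK : IsTwoMapAttractor α β K) (hr0 : r ≠ 0) (hr1 : |r| < 1)
    (hf : MapsTo (fun x => r * x + t) K K) :
    (∀ x ∈ K, r * x + t ≤ α) ∨ ∀ x ∈ K, 1 - β ≤ r * x + t := by
  by_contra! h
  obtain ⟨⟨p, hp, hpα⟩, q, hq, hqβ⟩ := h
  have hp' : 1 - β ≤ r * p + t := (hK.le_or_le_of_mem (hf hp)).resolve_left hpα.not_ge
  have hq' : r * q + t ≤ α := (hK.le_or_le_of_mem (hf hq)).resolve_right hqβ.not_ge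
  obtain ⟨hp0, hp1⟩ := hK.subset_Icc hp
  obtain ⟨hq0, hq1⟩ := hK.subset_Icc hq
  suffices ∃ c d, IsGap K c d ∧ d - c = (1 - α - β) / |r| by
    obtain ⟨c, d, h, hlen⟩ := this
    have hle := hK.gap_length_le h
    rw [hlen, div_le_iff₀ (abs_pos.2 hr0)] at hle
    nlinarith [hK.add_lt_one]
  rcases hr0.lt_or_gt with hneg | hpos
  · refine ⟨_, _, hK.isGap_central.preimage_of_neg hneg hf (by nlinarith) (by nlinarith), ?_⟩
    rw [abs_of_neg hneg]
    field_simp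
    ring
  · refine ⟨_, _, hK.isGap_central.preimage_of_pos hpos hf (by nlinarith) (by nlinarith), ?_⟩
    rw [abs_of_pos hpos]
    field_simp
    ring

theorem mapsTo_div_left (hK : IsTwoMapAttractor α β K) (hf : MapsTo (fun x => r * x + t) K K)
    (hle : ∀ x ∈ K, r * x + t ≤ α) : MapsTo (fun x => r / α * x + t / α) K K := by
  intro x hx
  obtain ⟨y, hy, hxy⟩ | ⟨y, hy, hxy⟩ := hK.mem_cases (hf hx)
  · convert hy using 1
    field_simp [hK.pos_left.ne']
    linarith
  · nlinarith [hle x hx, (hK.subset_Icc hy).1, hK.pos_right, hK.add_lt_one]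

theorem mapsTo_div_right (hK : IsTwoMapAttractor α β K) (hf : MapsTo (fun x => r * x + t) K K)
    (hge : ∀ x ∈ K, 1 - β ≤ r * x + t) :
    MapsTo (fun x => r / β * x + (t - (1 - β)) / β) K K := by
  intro x hx
  obtain ⟨y, hy, hxy⟩ | ⟨y, hy, hxy⟩ := hK.mem_cases (hf hx)
  · nlinarith [hge x hx, (hK.subset_Icc hy).2, hK.pos_left, hK.add_lt_one]
  · convert hy using 1
    field_simp [hK.pos_right.ne']
    linarith

theorem exists_word_of_pow_lt (hK : IsTwoMapAttractor α β K) (hne : α ≠ β)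
    {φ : Fin 2 → ℝ → ℝ} (hφ0 : ∀ x, φ 0 x = α * x)
    (hφ1 : ∀ x, φ 1 x = β * x + 1 - β) (n : ℕ) :
    ∀ {r t : ℝ}, max α β ^ n < |r| → MapsTo (fun x => r * x + t) K K →
      ∃ w : List (Fin 2), ∀ x, r * x + t = compWord φ w x := by
  induction n with
  | zero =>
    intro r t hr hf
    exact absurd (hK.abs_le_one_of_mapsTo hf) (by simpa using hr)
  | succ n ih =>
    intro r t hr hf
    have hr0 : r ≠ 0 :=
      abs_pos.1 ((pow_nonneg (hK.pos_left.le.trans (le_max_left α β)) _).trans_lt hr)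
    rcases (hK.abs_le_one_of_mapsTo hf).eq_or_lt with hr1 | hr1
    · obtain ⟨rfl, rfl⟩ := hK.eq_one_zero_of_abs_eq_one hne hf hr1
      exact ⟨[], fun x => by simp [compWord]⟩
    rcases hK.mapsTo_le_or_ge hr0 hr1 hf with hle | hge
    · obtain ⟨w, hw⟩ := ih (pow_lt_abs_div_of_pow_succ_lt hK.pos_left (le_max_left α β) hr)
        (hK.mapsTo_div_left hf hle)
      refine ⟨0 :: w, fun x => ?_⟩
      show _ = φ 0 (compWord φ w x)
      rw [hφ0, ← hw]
      field_simp [hK.pos_left.ne']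
    · obtain ⟨w, hw⟩ := ih (pow_lt_abs_div_of_pow_succ_lt hK.pos_right (le_max_right α β) hr)
        (hK.mapsTo_div_right hf hge)
      refine ⟨1 :: w, fun x => ?_⟩
      show _ = φ 1 (compWord φ w x)
      rw [hφ1, ← hw]
      field_simp [hK.pos_right.ne']
      ring

end IsTwoMapAttractor

theorem two_map_embedding_general (α β : ℝ) (hα : 0 < α) (hβ : 0 < β) (hne : α ≠ β)
    (hsum : α + β < 1)
    (K : Set ℝ) (hKc : IsCompact K) (hKne : K.Nonempty)
    (φ : Fin 2 → ℝ → ℝ)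
    (hφ1 : ∀ x, φ 0 x = α * x) (hφ2 : ∀ x, φ 1 x = β * x + 1 - β)
    (hK : K = φ 0 '' K ∪ φ 1 '' K)
    (r t : ℝ) (hr0 : 0 < |r|)
    (hf : (fun x : ℝ => r * x + t) '' K ⊆ K) :
    ∃ w : List (Fin 2), ∀ x : ℝ, r * x + t = compWord φ w x := by
  rw [show φ 0 = _ from funext hφ1, show φ 1 = _ from funext hφ2] at hK
  have hattr : IsTwoMapAttractor α β K := ⟨hα, hβ, hsum, hKc, hKne, hK⟩
  obtain ⟨n, hn⟩ := exists_pow_lt_of_lt_one hr0 hattr.max_lt_one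
  exact hattr.exists_word_of_pow_lt hne hφ1 hφ2 n hn (mapsTo_iff_image_subset.2 hf)

theorem two_map_embedding (α β : ℝ) (hα : 0 < α) (hβ : 0 < β) (hne : α ≠ β)
    (hsum : α + β < 1)
    (K : Set ℝ) (hKc : IsCompact K) (hKne : K.Nonempty)
    (φ : Fin 2 → ℝ → ℝ)
    (hφ1 : ∀ x, φ 0 x = α * x) (hφ2 : ∀ x, φ 1 x = β * x + 1 - β)
    (hK : K = φ 0 '' K ∪ φ 1 '' K)
    (r t : ℝ) (hr0 : 0 < |r|) (hr1 : |r| < 1)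
    (hf : (fun x : ℝ => r * x + t) '' K ⊆ K) :
    ∃ w : List (Fin 2), ∀ x : ℝ, r * x + t = compWord φ w x :=
  two_map_embedding_general α β hα hβ hne hsum K hKc hKne φ hφ1 hφ2 hK r t hr0 hf
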